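/- Fix a ball B(V_0, ρ) in Gr(d−n,d) with all elements at distance O(1) from span(e_1,…,e_{d−n}), a point v ∈ ℝ^n, and h ∈ [-2,2]^{d−n}. Define E_0 = ⋃ {(V' + (h,v)) ∩ [-2,2]^d : V' ∈ B(V_0,ρ)}. Then for every x ∈ ∏_{i=1}^{d−n}[h_i−ε, h_i+ε], the slice E_0 ∩ P_x, where P_x = {(x,y): y ∈ [-2,2]^n}, has n-dimensional measure ≲ (ερ)^n; consequently |E_0 ∩ A_h| ≲ ε^d ρ^n where A_h = (∏_{i=1}^{d−n}[h_i−ε, h_i+ε]) × [-2,2]^n. -/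

import Mathlib

open MeasureTheory
open scoped NNReal ENNReal

/-- The cube `[-2,2]^d` in `ℝ^d`. -/
def cube (d : ℕ) : Set (EuclideanSpace ℝ (Fin d)) := {x | ∀ i, |x i| ≤ 2}

/-- The Grassmannian distance `d_Gr(V,W) = d_H(V ∩ S^{d-1}, W ∩ S^{d-1})`. -/
noncomputable def dGr (d : ℕ) (V W : Submodule ℝ (EuclideanSpace ℝ (Fin d))) : ℝ :=
  Metric.hausdorffDist ((V : Set (EuclideanSpace ℝ (Fin d))) ∩ Metric.sphere 0 1)
    ((W : Set (EuclideanSpace ℝ (Fin d))) ∩ Metric.sphere 0 1)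

/-- The span of the first `d - n` standard basis vectors `e_1, …, e_{d-n}` of `ℝ^d`. -/
noncomputable def spanE (d n : ℕ) : Submodule ℝ (EuclideanSpace ℝ (Fin d)) :=
  Submodule.span ℝ {z | ∃ i : Fin d, (i : ℕ) < d - n ∧ z = EuclideanSpace.single i 1}

/-- The point `(h, v) ∈ ℝ^d` built from `h ∈ ℝ^{d-n}` and `v ∈ ℝ^n`. -/
noncomputable def glue (d n : ℕ) (h : Fin (d - n) → ℝ) (v : Fin n → ℝ) :
    EuclideanSpace ℝ (Fin d) :=
  (WithLp.equiv 2 (Fin d → ℝ)).symm fun i =>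
    if hi : (i : ℕ) < d - n then h ⟨i, hi⟩
    else v ⟨(i : ℕ) - (d - n), by have := i.isLt; omega⟩

/-- The ball `B(V₀,ρ)` in `Gr(d-n,d)`: subspaces of dimension `d - n` within `d_Gr`-distance
`ρ` of `V₀`. -/
noncomputable def grBall (d n : ℕ) (V₀ : Submodule ℝ (EuclideanSpace ℝ (Fin d))) (ρ : ℝ) :
    Set (Submodule ℝ (EuclideanSpace ℝ (Fin d))) :=
  {V' | Module.finrank ℝ V' = d - n ∧ dGr d V' V₀ < ρ}

/-- The set `E₀ = ⋃ {(V' + (h,v)) ∩ [-2,2]^d : V' ∈ B(V₀,ρ)}`. -/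
noncomputable def E0set (d n : ℕ) (V₀ : Submodule ℝ (EuclideanSpace ℝ (Fin d))) (ρ : ℝ)
    (h : Fin (d - n) → ℝ) (v : Fin n → ℝ) : Set (EuclideanSpace ℝ (Fin d)) :=
  ⋃ V' ∈ grBall d n V₀ ρ,
    ((fun u => glue d n h v + u) '' (V' : Set (EuclideanSpace ℝ (Fin d)))) ∩ cube d

/-- The slice plane `P_x = {(x,y) : y ∈ [-2,2]^n}`. -/
def PxBox (d n : ℕ) (x : Fin (d - n) → ℝ) : Set (EuclideanSpace ℝ (Fin d)) :=
  {z | (∀ i : Fin d, ∀ hi : (i : ℕ) < d - n, z i = x ⟨i, hi⟩) ∧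
    ∀ i : Fin d, d - n ≤ (i : ℕ) → |z i| ≤ 2}

/-- The slab `A_h = (∏_{i=1}^{d-n} [h_i - ε, h_i + ε]) × [-2,2]^n`. -/
def Ah (d n : ℕ) (h : Fin (d - n) → ℝ) (ε : ℝ) : Set (EuclideanSpace ℝ (Fin d)) :=
  {z | (∀ i : Fin d, ∀ hi : (i : ℕ) < d - n, |z i - h ⟨i, hi⟩| ≤ ε) ∧
    ∀ i : Fin d, d - n ≤ (i : ℕ) → |z i| ≤ 2}

noncomputable def Pmap (d n : ℕ) : EuclideanSpace ℝ (Fin d) →ₗ[ℝ] EuclideanSpace ℝ (Fin d) where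
  toFun z := WithLp.toLp 2 (fun i : Fin d => if (i : ℕ) < d - n then z i else 0)
  map_add' x y := by
    ext i
    by_cases h : (i : ℕ) < d - n <;> simp [h, PiLp.add_apply]
  map_smul' c x := by
    ext i
    by_cases h : (i : ℕ) < d - n <;> simp [h, PiLp.smul_apply]

lemma Pmap_apply (d n : ℕ) (z : EuclideanSpace ℝ (Fin d)) (i : Fin d) :
    Pmap d n z i = if (i : ℕ) < d - n then z i else 0 := rfl

lemma normP_le (d n : ℕ) (z : EuclideanSpace ℝ (Fin d)) : ‖Pmap d n z‖ ≤ ‖z‖ := by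
  rw [EuclideanSpace.norm_eq, EuclideanSpace.norm_eq]
  apply Real.sqrt_le_sqrt
  apply Finset.sum_le_sum
  intro i _
  rw [Pmap_apply]
  by_cases h : (i : ℕ) < d - n <;> simp [h] <;> positivity

lemma normQ_le (d n : ℕ) (z : EuclideanSpace ℝ (Fin d)) : ‖z - Pmap d n z‖ ≤ ‖z‖ := by
  rw [EuclideanSpace.norm_eq, EuclideanSpace.norm_eq]
  apply Real.sqrt_le_sqrt
  apply Finset.sum_le_sum
  intro i _
  rw [PiLp.sub_apply, Pmap_apply]
  by_cases h : (i : ℕ) < d - n <;> simp [h] <;> positivity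

lemma norm_le_PQ (d n : ℕ) (z : EuclideanSpace ℝ (Fin d)) :
    ‖z‖ ≤ ‖Pmap d n z‖ + ‖z - Pmap d n z‖ := by
  have : z = Pmap d n z + (z - Pmap d n z) := by abel
  calc ‖z‖ = ‖Pmap d n z + (z - Pmap d n z)‖ := by rw [← this]
  _ ≤ _ := norm_add_le _ _

lemma normP_of_coords (d n : ℕ) (z : EuclideanSpace ℝ (Fin d)) (a : ℝ) (ha : 0 ≤ a)
    (hz : ∀ i : Fin d, (i : ℕ) < d - n → |z i| ≤ a) : ‖Pmap d n z‖ ≤ d * a := by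
  rw [EuclideanSpace.norm_eq]
  have h1 : ∑ i : Fin d, ‖Pmap d n z i‖ ^ 2 ≤ ∑ _i : Fin d, a ^ 2 := by
    apply Finset.sum_le_sum
    intro i _
    rw [Pmap_apply]
    by_cases h : (i : ℕ) < d - n
    · simp only [h, if_true, Real.norm_eq_abs]
      have := hz i h
      nlinarith [abs_nonneg (z i)]
    · simp [h]; positivity
  calc √(∑ i : Fin d, ‖Pmap d n z i‖ ^ 2) ≤ √(∑ _i : Fin d, a ^ 2) := Real.sqrt_le_sqrt h1
  _ = √((d : ℝ) * a ^ 2) := by rw [Finset.sum_const]; simp [mul_comm]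
  _ ≤ √((d : ℝ) ^ 2 * a ^ 2) := by
      apply Real.sqrt_le_sqrt
      have : (d : ℝ) ≤ (d : ℝ) ^ 2 := by
        have := Nat.le_self_pow (two_ne_zero) d
        exact_mod_cast Nat.cast_le.mpr this
      nlinarith [sq_nonneg a]
  _ = d * a := by
      rw [← mul_pow, Real.sqrt_sq (by positivity)]

lemma coord_le_norm (d : ℕ) (z : EuclideanSpace ℝ (Fin d)) (i : Fin d) : |z i| ≤ ‖z‖ := by
  rw [EuclideanSpace.norm_eq, ← Real.sqrt_sq (abs_nonneg (z i))]
  apply Real.sqrt_le_sqrt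
  rw [sq_abs]
  have : (z i) ^ 2 = ‖z i‖ ^ 2 := by simp [Real.norm_eq_abs, sq_abs]
  rw [this]
  exact Finset.single_le_sum (f := fun j => ‖z j‖ ^ 2) (fun j _ => by positivity) (Finset.mem_univ i)
-- spanE vectors vanish on high coordinates
lemma spanE_coords (d n : ℕ) (z : EuclideanSpace ℝ (Fin d)) (hz : z ∈ spanE d n) :
    Pmap d n z = z := by
  induction hz using Submodule.span_induction with
  | mem w hw =>
    obtain ⟨i, hi, rfl⟩ := hw
    ext j
    rw [Pmap_apply]
    by_cases h : (j : ℕ) < d - n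
    · simp [h]
    · have hij : j ≠ i := by
        intro e; subst e; exact h hi
      simp [h, EuclideanSpace.single_apply, hij]
  | zero => simp
  | add x y _ _ hx hy => rw [map_add, hx, hy]
  | smul c x _ hx => rw [_root_.map_smul, hx]

lemma sphere_nonempty_of_finrank (d : ℕ) (V : Submodule ℝ (EuclideanSpace ℝ (Fin d)))
    (hV : 0 < Module.finrank ℝ V) :
    ((V : Set (EuclideanSpace ℝ (Fin d))) ∩ Metric.sphere 0 1).Nonempty := by
  have hbot : V ≠ ⊥ := by
    intro hb
    rw [hb] at hV
    simp at hV
  obtain ⟨v, hv, hv0⟩ := Submodule.exists_mem_ne_zero_of_ne_bot hbot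
  refine ⟨‖v‖⁻¹ • v, ?_, ?_⟩
  · exact V.smul_mem _ hv
  · simp [Metric.mem_sphere, norm_smul, norm_inv, norm_norm,
      inv_mul_cancel₀ (norm_ne_zero_iff.mpr hv0)]

lemma sphere_bounded (d : ℕ) (V : Submodule ℝ (EuclideanSpace ℝ (Fin d))) :
    Bornology.IsBounded ((V : Set (EuclideanSpace ℝ (Fin d))) ∩ Metric.sphere 0 1) :=
  (Metric.isBounded_sphere).subset Set.inter_subset_right

lemma spanE_sphere_nonempty (d n : ℕ) (hdn : 0 < d - n) :
    ((spanE d n : Set (EuclideanSpace ℝ (Fin d))) ∩ Metric.sphere 0 1).Nonempty := by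
  have hd : 0 < d := lt_of_lt_of_le hdn (Nat.sub_le d n)
  refine ⟨EuclideanSpace.single (⟨0, hd⟩ : Fin d) 1, ?_, ?_⟩
  · exact Submodule.subset_span ⟨⟨0, hd⟩, by simpa using hdn, rfl⟩
  · simp [Metric.mem_sphere, EuclideanSpace.norm_single]

-- transfer: a point of a subspace is close (relative to its norm) to another subspace
-- whose unit spheres have small Hausdorff distance
lemma near_subspace (d : ℕ) (V W : Submodule ℝ (EuclideanSpace ℝ (Fin d)))
    (hV : ((V : Set (EuclideanSpace ℝ (Fin d))) ∩ Metric.sphere 0 1).Nonempty)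
    (hW : ((W : Set (EuclideanSpace ℝ (Fin d))) ∩ Metric.sphere 0 1).Nonempty)
    (r : ℝ) (hr : dGr d V W < r) (u : EuclideanSpace ℝ (Fin d)) (hu : u ∈ V) :
    ∃ w ∈ W, ‖u - w‖ ≤ r * ‖u‖ := by
  rcases eq_or_ne u 0 with rfl | hu0
  · exact ⟨0, W.zero_mem, by simp⟩
  · have hne : EMetric.hausdorffEdist ((V : Set (EuclideanSpace ℝ (Fin d))) ∩ Metric.sphere 0 1)
        ((W : Set (EuclideanSpace ℝ (Fin d))) ∩ Metric.sphere 0 1) ≠ ⊤ :=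
      Metric.hausdorffEdist_ne_top_of_nonempty_of_bounded hV hW
        (sphere_bounded d V) (sphere_bounded d W)
    have hs : ‖u‖⁻¹ • u ∈ (V : Set (EuclideanSpace ℝ (Fin d))) ∩ Metric.sphere 0 1 := by
      constructor
      · exact V.smul_mem _ hu
      · simp [Metric.mem_sphere, norm_smul,
          inv_mul_cancel₀ (norm_ne_zero_iff.mpr hu0)]
    obtain ⟨w, hw, hdw⟩ := Metric.exists_dist_lt_of_hausdorffDist_lt hs hr hne
    refine ⟨‖u‖ • w, W.smul_mem _ hw.1, ?_⟩
    have : u - ‖u‖ • w = ‖u‖ • (‖u‖⁻¹ • u - w) := by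
      rw [smul_sub, smul_smul, mul_inv_cancel₀ (norm_ne_zero_iff.mpr hu0), one_smul]
    rw [this, norm_smul, Real.norm_eq_abs, abs_of_nonneg (norm_nonneg u), mul_comm]
    have := hdw.le
    rw [dist_eq_norm] at this
    exact mul_le_mul_of_nonneg_right this (norm_nonneg u)

section Plane
variable (d n : ℕ) (V₀ : Submodule ℝ (EuclideanSpace ℝ (Fin d))) (ρ : ℝ)

-- any plane in the ball has its "vertical part" controlled
lemma planeQ (hdn : 0 < d - n)
    (hc : ∀ V' ∈ grBall d n V₀ ρ, dGr d V' (spanE d n) ≤ 1/8)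
    (V' : Submodule ℝ (EuclideanSpace ℝ (Fin d))) (hV' : V' ∈ grBall d n V₀ ρ)
    (u : EuclideanSpace ℝ (Fin d)) (hu : u ∈ V') :
    ‖u - Pmap d n u‖ ≤ (1/4) * ‖u‖ := by
  have hVs : ((V' : Set (EuclideanSpace ℝ (Fin d))) ∩ Metric.sphere 0 1).Nonempty :=
    sphere_nonempty_of_finrank d V' (by rw [hV'.1]; exact hdn)
  have hr : dGr d V' (spanE d n) < 1/4 := lt_of_le_of_lt (hc V' hV') (by norm_num)
  obtain ⟨w, hw, hww⟩ := near_subspace d V' (spanE d n) hVs (spanE_sphere_nonempty d n hdn)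
    (1/4) hr u hu
  have hPw : Pmap d n w = w := spanE_coords d n w hw
  have key : u - Pmap d n u = (u - w) - Pmap d n (u - w) := by
    rw [map_sub, hPw]; abel
  rw [key]
  calc ‖(u - w) - Pmap d n (u - w)‖ ≤ ‖u - w‖ := normQ_le d n (u - w)
  _ ≤ (1/4) * ‖u‖ := hww

lemma planeNorm (hdn : 0 < d - n)
    (hc : ∀ V' ∈ grBall d n V₀ ρ, dGr d V' (spanE d n) ≤ 1/8)
    (V' : Submodule ℝ (EuclideanSpace ℝ (Fin d))) (hV' : V' ∈ grBall d n V₀ ρ)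
    (u : EuclideanSpace ℝ (Fin d)) (hu : u ∈ V') :
    ‖u‖ ≤ 2 * ‖Pmap d n u‖ := by
  have h1 := norm_le_PQ d n u
  have h2 := planeQ d n V₀ ρ hdn hc V' hV' u hu
  have h3 := norm_nonneg (Pmap d n u)
  linarith

-- spheres of two planes in the ball are within 2 * min ρ 1 in Hausdorff distance
lemma crossDist (hdn : 0 < d - n) (hρ : 0 < ρ)
    (hV₀ : Module.finrank ℝ V₀ = d - n)
    (hc : ∀ V' ∈ grBall d n V₀ ρ, dGr d V' (spanE d n) ≤ 1/8)
    (V' V'' : Submodule ℝ (EuclideanSpace ℝ (Fin d)))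
    (hV' : V' ∈ grBall d n V₀ ρ) (hV'' : V'' ∈ grBall d n V₀ ρ) :
    dGr d V' V'' < 2 * min ρ 1 := by
  have nV' : ((V' : Set (EuclideanSpace ℝ (Fin d))) ∩ Metric.sphere 0 1).Nonempty :=
    sphere_nonempty_of_finrank d V' (by rw [hV'.1]; exact hdn)
  have nV'' : ((V'' : Set (EuclideanSpace ℝ (Fin d))) ∩ Metric.sphere 0 1).Nonempty :=
    sphere_nonempty_of_finrank d V'' (by rw [hV''.1]; exact hdn)
  rcases le_or_gt ρ 1 with hρ1 | hρ1
  · -- via V₀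
    have nV₀ : ((V₀ : Set (EuclideanSpace ℝ (Fin d))) ∩ Metric.sphere 0 1).Nonempty :=
      sphere_nonempty_of_finrank d V₀ (by rw [hV₀]; exact hdn)
    have fin1 : EMetric.hausdorffEdist
        ((V' : Set (EuclideanSpace ℝ (Fin d))) ∩ Metric.sphere 0 1)
        ((V₀ : Set (EuclideanSpace ℝ (Fin d))) ∩ Metric.sphere 0 1) ≠ ⊤ :=
      Metric.hausdorffEdist_ne_top_of_nonempty_of_bounded nV' nV₀
        (sphere_bounded d V') (sphere_bounded d V₀)
    have tri : dGr d V' V'' ≤ dGr d V' V₀ + dGr d V₀ V'' :=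
      Metric.hausdorffDist_triangle fin1
    have hsym : dGr d V₀ V'' = dGr d V'' V₀ := Metric.hausdorffDist_comm
    rw [min_eq_left hρ1]
    have := hV'.2
    have := hV''.2
    rw [hsym] at tri
    linarith
  · -- via spanE
    have nE : ((spanE d n : Set (EuclideanSpace ℝ (Fin d))) ∩ Metric.sphere 0 1).Nonempty :=
      spanE_sphere_nonempty d n hdn
    have fin1 : EMetric.hausdorffEdist
        ((V' : Set (EuclideanSpace ℝ (Fin d))) ∩ Metric.sphere 0 1)
        ((spanE d n : Set (EuclideanSpace ℝ (Fin d))) ∩ Metric.sphere 0 1) ≠ ⊤ :=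
      Metric.hausdorffEdist_ne_top_of_nonempty_of_bounded nV' nE
        (sphere_bounded d V') (sphere_bounded d (spanE d n))
    have tri : dGr d V' V'' ≤ dGr d V' (spanE d n) + dGr d (spanE d n) V'' :=
      Metric.hausdorffDist_triangle fin1
    have hsym : dGr d (spanE d n) V'' = dGr d V'' (spanE d n) := Metric.hausdorffDist_comm
    rw [min_eq_right hρ1.le]
    have h1 := hc V' hV'
    have h2 := hc V'' hV''
    rw [hsym] at tri
    linarith

end Plane

lemma glue_low (d n : ℕ) (h : Fin (d - n) → ℝ) (v : Fin n → ℝ) (i : Fin d)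
    (hi : (i : ℕ) < d - n) : glue d n h v i = h ⟨i, hi⟩ := by
  simp only [glue, WithLp.equiv_symm_apply, PiLp.toLp_apply]
  rw [dif_pos hi]

lemma mem_E0set (d n : ℕ) (V₀ : Submodule ℝ (EuclideanSpace ℝ (Fin d))) (ρ : ℝ)
    (h : Fin (d - n) → ℝ) (v : Fin n → ℝ) (z : EuclideanSpace ℝ (Fin d))
    (hz : z ∈ E0set d n V₀ ρ h v) :
    ∃ V' ∈ grBall d n V₀ ρ, z - glue d n h v ∈ V' := by
  rw [E0set, Set.mem_iUnion₂] at hz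
  obtain ⟨V', hV', hmem⟩ := hz
  obtain ⟨⟨u, hu, rfl⟩, -⟩ := hmem
  refine ⟨V', hV', ?_⟩
  simpa using hu

lemma master (d n : ℕ) (hdn : 0 < d - n) (V₀ : Submodule ℝ (EuclideanSpace ℝ (Fin d)))
    (hV₀ : Module.finrank ℝ V₀ = d - n) (ρ : ℝ) (hρ : 0 < ρ) (ε : ℝ) (hε : 0 < ε)
    (h : Fin (d - n) → ℝ) (v : Fin n → ℝ)
    (hc : ∀ V' ∈ grBall d n V₀ ρ, dGr d V' (spanE d n) ≤ 1/8)
    (z z' : EuclideanSpace ℝ (Fin d))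
    (hz : z ∈ E0set d n V₀ ρ h v) (hz' : z' ∈ E0set d n V₀ ρ h v)
    (hz1 : ∀ i : Fin d, ∀ hi : (i : ℕ) < d - n, |z i - h ⟨i, hi⟩| ≤ ε)
    (hz'1 : ∀ i : Fin d, ∀ hi : (i : ℕ) < d - n, |z' i - h ⟨i, hi⟩| ≤ ε) :
    ‖z - z'‖ ≤ 2 * ‖Pmap d n (z - z')‖ + 12 * d * ε * min ρ 1 := by
  set g := glue d n h v with hg
  obtain ⟨V', hV', hu⟩ := mem_E0set d n V₀ ρ h v z hz
  obtain ⟨V'', hV'', hu'⟩ := mem_E0set d n V₀ ρ h v z' hz'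
  set u := z - g
  set u' := z' - g
  have hzz' : z - z' = u - u' := by show z - z' = (z - g) - (z' - g); abel
  -- bound on ‖P u‖ and ‖u‖
  have hPu : ‖Pmap d n u‖ ≤ d * ε := by
    apply normP_of_coords d n u ε hε.le
    intro i hi
    have : u i = z i - h ⟨i, hi⟩ := by
      show z i - g i = _
      rw [hg, glue_low d n h v i hi]
    rw [this]
    exact hz1 i hi
  have hnu : ‖u‖ ≤ 2 * (d * ε) :=
    le_trans (planeNorm d n V₀ ρ hdn hc V' hV' u hu)
      (by linarith [hPu])
  -- transfer u to V''
  have hVs' : ((V' : Set (EuclideanSpace ℝ (Fin d))) ∩ Metric.sphere 0 1).Nonempty :=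
    sphere_nonempty_of_finrank d V' (by rw [hV'.1]; exact hdn)
  have hVs'' : ((V'' : Set (EuclideanSpace ℝ (Fin d))) ∩ Metric.sphere 0 1).Nonempty :=
    sphere_nonempty_of_finrank d V'' (by rw [hV''.1]; exact hdn)
  have hcr := crossDist d n V₀ ρ hdn hρ hV₀ hc V' V'' hV' hV''
  obtain ⟨w, hw, hww⟩ := near_subspace d V' V'' hVs' hVs'' (2 * min ρ 1) hcr u hu
  have hmin0 : (0 : ℝ) ≤ min ρ 1 := le_min hρ.le zero_le_one
  have huw : ‖u - w‖ ≤ 2 * min ρ 1 * (2 * (d * ε)) :=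
    le_trans hww (by
      apply mul_le_mul_of_nonneg_left hnu (by positivity))
  -- bound ‖u' - w‖ via planeNorm on V''
  have hu'w : u' - w ∈ V'' := V''.sub_mem hu' hw
  have h1 : ‖u' - w‖ ≤ 2 * ‖Pmap d n (u' - w)‖ :=
    planeNorm d n V₀ ρ hdn hc V'' hV'' (u' - w) hu'w
  have h2 : ‖Pmap d n (u' - w)‖ ≤ ‖Pmap d n (z - z')‖ + ‖u - w‖ := by
    have e : u' - w = -(u - u') + (u - w) := by abel
    rw [e, map_add]
    refine le_trans (norm_add_le _ _) ?_
    have e1 : ‖Pmap d n (-(u - u'))‖ = ‖Pmap d n (z - z')‖ := by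
      rw [map_neg, norm_neg, hzz']
    rw [e1]
    exact add_le_add_right (normP_le d n (u - w)) _
  have tri : ‖u - u'‖ ≤ ‖u - w‖ + ‖u' - w‖ := by
    have e : u - u' = (u - w) - (u' - w) := by abel
    rw [e]
    exact norm_sub_le _ _
  have hd0 : (0:ℝ) ≤ (d:ℝ) := Nat.cast_nonneg d
  calc ‖z - z'‖ = ‖u - u'‖ := by rw [hzz']
  _ ≤ ‖u - w‖ + ‖u' - w‖ := tri
  _ ≤ ‖u - w‖ + (2 * (‖Pmap d n (z - z')‖ + ‖u - w‖)) := by linarith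
  _ = 2 * ‖Pmap d n (z - z')‖ + 3 * ‖u - w‖ := by ring
  _ ≤ 2 * ‖Pmap d n (z - z')‖ + 3 * (2 * min ρ 1 * (2 * (d * ε))) := by linarith
  _ = 2 * ‖Pmap d n (z - z')‖ + 12 * d * ε * min ρ 1 := by ring

lemma norm_le_of_coords (d : ℕ) (z : EuclideanSpace ℝ (Fin d)) (a : ℝ) (ha : 0 ≤ a)
    (hz : ∀ i : Fin d, |z i| ≤ a) : ‖z‖ ≤ d * a := by
  rw [EuclideanSpace.norm_eq]
  have h1 : ∑ i : Fin d, ‖z i‖ ^ 2 ≤ ∑ _i : Fin d, a ^ 2 := by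
    apply Finset.sum_le_sum
    intro i _
    have := hz i
    rw [Real.norm_eq_abs]
    nlinarith [abs_nonneg (z i)]
  calc √(∑ i : Fin d, ‖z i‖ ^ 2) ≤ √(∑ _i : Fin d, a ^ 2) := Real.sqrt_le_sqrt h1
  _ = √((d : ℝ) * a ^ 2) := by rw [Finset.sum_const]; simp [mul_comm]
  _ ≤ √((d : ℝ) ^ 2 * a ^ 2) := by
      apply Real.sqrt_le_sqrt
      have : (d : ℝ) ≤ (d : ℝ) ^ 2 := by
        have := Nat.le_self_pow (two_ne_zero) d
        exact_mod_cast Nat.cast_le.mpr this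
      nlinarith [sq_nonneg a]
  _ = d * a := by rw [← mul_pow, Real.sqrt_sq (by positivity)]

noncomputable def Gmap (d n : ℕ) (x : Fin (d - n) → ℝ) (y : Fin n → ℝ) :
    EuclideanSpace ℝ (Fin d) :=
  (WithLp.equiv 2 (Fin d → ℝ)).symm fun i =>
    if hi : (i : ℕ) < d - n then x ⟨i, hi⟩
    else y ⟨(i : ℕ) - (d - n), by have := i.isLt; omega⟩

lemma Gmap_apply (d n : ℕ) (x : Fin (d - n) → ℝ) (y : Fin n → ℝ) (i : Fin d) :
    Gmap d n x y i = if hi : (i : ℕ) < d - n then x ⟨i, hi⟩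
      else y ⟨(i : ℕ) - (d - n), by have := i.isLt; omega⟩ := rfl

lemma Gmap_lipschitz (d n : ℕ) (x : Fin (d - n) → ℝ) :
    LipschitzWith (d : ℝ≥0) (Gmap d n x) := by
  apply LipschitzWith.of_dist_le_mul
  intro y y'
  have key : ∀ i : Fin d, |(Gmap d n x y - Gmap d n x y') i| ≤ dist y y' := by
    intro i
    rw [PiLp.sub_apply, Gmap_apply, Gmap_apply]
    by_cases hi : (i : ℕ) < d - n
    · rw [dif_pos hi, dif_pos hi]
      simp [dist_nonneg]
    · rw [dif_neg hi, dif_neg hi]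
      have := dist_le_pi_dist y y' ⟨(i : ℕ) - (d - n), by have := i.isLt; omega⟩
      rw [Real.dist_eq] at this
      exact this
  have := norm_le_of_coords d (Gmap d n x y - Gmap d n x y') (dist y y') dist_nonneg key
  calc dist (Gmap d n x y) (Gmap d n x y') = ‖Gmap d n x y - Gmap d n x y'‖ := dist_eq_norm _ _
  _ ≤ d * dist y y' := this
  _ = (d : ℝ≥0) * dist y y' := by norm_num

lemma PxBox_eq_Gmap (d n : ℕ) (hnd : n ≤ d) (x : Fin (d - n) → ℝ)
    (z : EuclideanSpace ℝ (Fin d)) (hz : z ∈ PxBox d n x) :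
    z = Gmap d n x (fun j => z ⟨(d - n) + (j : ℕ), by omega⟩) := by
  ext i
  rw [Gmap_apply]
  by_cases hi : (i : ℕ) < d - n
  · rw [dif_pos hi]
    exact hz.1 i hi
  · rw [dif_neg hi]
    refine congrArg (fun j => z j) ?_
    apply Fin.ext
    simp only []
    omega

lemma slice_bound (d n : ℕ) (hn : 1 ≤ n) (hnd : n < d)
    (V₀ : Submodule ℝ (EuclideanSpace ℝ (Fin d)))
    (hV₀ : Module.finrank ℝ V₀ = d - n) (ρ : ℝ) (hρ : 0 < ρ) (ε : ℝ) (hε : 0 < ε)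
    (h : Fin (d - n) → ℝ) (v : Fin n → ℝ)
    (hc : ∀ V' ∈ grBall d n V₀ ρ, dGr d V' (spanE d n) ≤ 1/8)
    (x : Fin (d - n) → ℝ) (hx : ∀ i, |x i - h i| ≤ ε) :
    μH[(n : ℝ)] (E0set d n V₀ ρ h v ∩ PxBox d n x) ≤
      ENNReal.ofReal ((d : ℝ) ^ n * (24 * d * ε * min ρ 1) ^ n) := by
  have hdn : 0 < d - n := by omega
  set S := E0set d n V₀ ρ h v ∩ PxBox d n x with hS
  rcases S.eq_empty_or_nonempty with hSe | ⟨z₀, hz₀⟩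
  · rw [hSe]; simp
  set r : ℝ := 12 * d * ε * min ρ 1 with hr
  have hr0 : 0 ≤ r := by
    have : (0:ℝ) ≤ min ρ 1 := le_min hρ.le zero_le_one
    positivity
  -- every element of S satisfies the coordinate bound
  have hcoord : ∀ z ∈ S, ∀ i : Fin d, ∀ hi : (i : ℕ) < d - n, |z i - h ⟨i, hi⟩| ≤ ε := by
    intro z hzS i hi
    rw [hzS.2.1 i hi]
    exact hx ⟨i, hi⟩
  -- any two elements of S are within r
  have hdiam : ∀ z ∈ S, ∀ z' ∈ S, ‖z - z'‖ ≤ r := by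
    intro z hzS z' hz'S
    have hP : Pmap d n (z - z') = 0 := by
      ext i
      rw [Pmap_apply]
      by_cases hi : (i : ℕ) < d - n
      · rw [if_pos hi, PiLp.sub_apply, hzS.2.1 i hi, hz'S.2.1 i hi, sub_self]
        rfl
      · rw [if_neg hi]; rfl
    have := master d n hdn V₀ hV₀ ρ hρ ε hε h v hc z z' hzS.1 hz'S.1
      (hcoord z hzS) (hcoord z' hz'S)
    rw [hP] at this
    simpa using this
  -- the preimage under Gmap
  set y₀ : Fin n → ℝ := fun j => z₀ ⟨(d - n) + (j : ℕ), by omega⟩ with hy₀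
  set T : Set (Fin n → ℝ) := Gmap d n x ⁻¹' S with hT
  have hture : S ⊆ Gmap d n x '' T := by
    intro z hzS
    refine ⟨fun j => z ⟨(d - n) + (j : ℕ), by omega⟩, ?_, ?_⟩
    · show Gmap d n x _ ∈ S
      rw [← PxBox_eq_Gmap d n hnd.le x z hzS.2]
      exact hzS
    · exact (PxBox_eq_Gmap d n hnd.le x z hzS.2).symm
  have hz₀G : Gmap d n x y₀ = z₀ := (PxBox_eq_Gmap d n hnd.le x z₀ hz₀.2).symm
  have hTball : T ⊆ Metric.closedBall y₀ r := by
    intro y hy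
    rw [Metric.mem_closedBall, dist_pi_le_iff hr0]
    intro j
    have hjd : (d - n) + (j : ℕ) < d := by omega
    have hGn : ‖Gmap d n x y - z₀‖ ≤ r := hdiam _ hy _ hz₀
    have hcoordle := coord_le_norm d (Gmap d n x y - z₀) ⟨(d - n) + (j : ℕ), hjd⟩
    rw [Real.dist_eq]
    have hnotlt : ¬ (((⟨(d - n) + (j : ℕ), hjd⟩ : Fin d) : ℕ) < d - n) := by
      show ¬ ((d - n) + (j : ℕ) < d - n); omega
    have hidx : (⟨((⟨(d - n) + (j : ℕ), hjd⟩ : Fin d) : ℕ) - (d - n),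
        by omega⟩ : Fin n) = j := by
      apply Fin.ext
      show ((d - n) + (j : ℕ)) - (d - n) = (j : ℕ)
      omega
    have e1 : (Gmap d n x y - z₀) ⟨(d - n) + (j : ℕ), hjd⟩ = y j - y₀ j := by
      rw [PiLp.sub_apply, Gmap_apply, dif_neg hnotlt, hidx]
    rw [← e1] at *
    exact le_trans hcoordle hGn
  -- measure computation
  have hμT : μH[(n : ℝ)] T ≤ ENNReal.ofReal ((2 * r) ^ n) := by
    have hpi : (μH[(n : ℝ)] : Measure (Fin n → ℝ)) = volume := by
      have := hausdorffMeasure_pi_real (ι := Fin n)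
      simpa using this
    rw [hpi]
    refine le_trans (measure_mono hTball) ?_
    rw [closedBall_pi _ hr0, volume_pi_pi]
    simp only [Real.volume_closedBall]
    rw [Finset.prod_const]
    rw [← ENNReal.ofReal_pow (by positivity)]
    simp
  calc μH[(n : ℝ)] S ≤ μH[(n : ℝ)] (Gmap d n x '' T) := measure_mono hture
  _ ≤ (d : ℝ≥0) ^ (n : ℝ) * μH[(n : ℝ)] T :=
      (Gmap_lipschitz d n x).hausdorffMeasure_image_le (by positivity) T
  _ ≤ (d : ℝ≥0) ^ (n : ℝ) * ENNReal.ofReal ((2 * r) ^ n) := by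
      exact mul_le_mul_right hμT _
  _ = ENNReal.ofReal ((d : ℝ) ^ n * (2 * r) ^ n) := by
      rw [ENNReal.ofReal_mul (by positivity)]
      congr 1
      rw [ENNReal.rpow_natCast, ENNReal.ofReal_pow (by positivity : (0:ℝ) ≤ (d:ℝ)) n,
        ENNReal.ofReal_natCast, ENNReal.coe_natCast]
  _ = ENNReal.ofReal ((d : ℝ) ^ n * (24 * d * ε * min ρ 1) ^ n) := by
      congr 2
      rw [hr]; ring

lemma vol_of_diam (d : ℕ) (S : Set (EuclideanSpace ℝ (Fin d))) (r : ℝ) (hr : 0 ≤ r)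
    (hdm : ∀ z ∈ S, ∀ z' ∈ S, ‖z - z'‖ ≤ r) :
    volume S ≤ ENNReal.ofReal (r ^ d) * volume (Metric.ball (0 : EuclideanSpace ℝ (Fin d)) 1) := by
  rcases S.eq_empty_or_nonempty with hSe | ⟨z₀, hz₀⟩
  · rw [hSe]; simp
  have hsub : S ⊆ Metric.closedBall z₀ r := by
    intro z hz
    rw [Metric.mem_closedBall, dist_eq_norm]
    exact hdm z hz z₀ hz₀
  refine le_trans (measure_mono hsub) ?_
  rw [Measure.addHaar_closedBall volume z₀ hr, finrank_euclideanSpace_fin]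

lemma grid_cover (a L : ℝ) (hL : 0 < L) (N : ℕ) (hN : 0 < N) (t : ℝ)
    (ht : a ≤ t) (ht2 : t ≤ a + L) :
    ∃ k : Fin N, a + ((k : ℕ) : ℝ) * (L / N) ≤ t ∧ t ≤ a + (((k : ℕ) : ℝ) + 1) * (L / N) := by
  set δ := L / N with hδ
  have hδ0 : 0 < δ := by positivity
  set s := (t - a) / δ with hs
  have hs0 : 0 ≤ s := div_nonneg (by linarith) hδ0.le
  have hsd : s * δ = t - a := by rw [hs, div_mul_cancel₀ _ hδ0.ne']
  set km : ℕ := min ⌊s⌋₊ (N - 1) with hkm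
  have hkmN : km < N := by
    have : km ≤ N - 1 := min_le_right _ _
    omega
  refine ⟨⟨km, hkmN⟩, ?_, ?_⟩
  · show a + ((km : ℕ) : ℝ) * δ ≤ t
    have h1 : (km : ℝ) ≤ s := by
      have h2 : (km : ℕ) ≤ ⌊s⌋₊ := min_le_left _ _
      calc (km : ℝ) ≤ (⌊s⌋₊ : ℝ) := by exact_mod_cast h2
      _ ≤ s := Nat.floor_le hs0
    have h3 : (km : ℝ) * δ ≤ s * δ := mul_le_mul_of_nonneg_right h1 hδ0.le
    linarith
  · show t ≤ a + (((km : ℕ) : ℝ) + 1) * δ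
    rcases le_or_gt (⌊s⌋₊ : ℕ) (N - 1) with hcase | hcase
    · have hk : km = ⌊s⌋₊ := min_eq_left hcase
      have h1 : s < (⌊s⌋₊ : ℝ) + 1 := Nat.lt_floor_add_one s
      have h4 : ((km : ℕ) : ℝ) = ((⌊s⌋₊ : ℕ) : ℝ) := by exact_mod_cast congrArg (Nat.cast (R := ℝ)) hk
      have h3 : s * δ < (((km : ℕ) : ℝ) + 1) * δ := by
        rw [h4]
        exact mul_lt_mul_of_pos_right h1 hδ0
      linarith
    · have hk : km = N - 1 := min_eq_right (le_of_lt hcase)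
      have hNδ : (N : ℝ) * δ = L := by
        rw [hδ, mul_comm, div_mul_cancel₀ _ (by positivity : (N:ℝ) ≠ 0)]
      have h4 : ((km : ℕ) : ℝ) + 1 = (N : ℝ) := by
        have : km + 1 = N := by omega
        exact_mod_cast congrArg (Nat.cast (R := ℝ)) this
      rw [h4, hNδ]
      linarith

lemma vol_bound (d n : ℕ) (hn : 1 ≤ n) (hnd : n < d)
    (V₀ : Submodule ℝ (EuclideanSpace ℝ (Fin d)))
    (hV₀ : Module.finrank ℝ V₀ = d - n) (ρ : ℝ) (hρ : 0 < ρ) (ε : ℝ) (hε : 0 < ε)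
    (h : Fin (d - n) → ℝ) (v : Fin n → ℝ)
    (hc : ∀ V' ∈ grBall d n V₀ ρ, dGr d V' (spanE d n) ≤ 1/8) :
    volume (E0set d n V₀ ρ h v ∩ Ah d n h ε) ≤
      ENNReal.ofReal ((2 / min ρ 1) ^ (d - n) * (16 * d * ε * min ρ 1) ^ d) *
        volume (Metric.ball (0 : EuclideanSpace ℝ (Fin d)) 1) := by
  have hdn : 0 < d - n := by omega
  set ρ' := min ρ 1 with hρ'
  have hρ'0 : 0 < ρ' := lt_min hρ one_pos
  have hρ'1 : ρ' ≤ 1 := min_le_right _ _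
  set S := E0set d n V₀ ρ h v ∩ Ah d n h ε with hS
  set N : ℕ := ⌈1 / ρ'⌉₊ with hN
  have hN0 : 0 < N := by
    apply Nat.ceil_pos.mpr
    positivity
  have hNge : 1 / ρ' ≤ (N : ℝ) := Nat.le_ceil _
  have hNle : (N : ℝ) ≤ 2 / ρ' := by
    have h1 : (N : ℝ) < 1 / ρ' + 1 := Nat.ceil_lt_add_one (by positivity)
    have h2 : (1 : ℝ) ≤ 1 / ρ' := by
      rw [le_div_iff₀ hρ'0]
      linarith
    calc (N : ℝ) ≤ 1 / ρ' + 1 := h1.le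
    _ ≤ 1 / ρ' + 1 / ρ' := by linarith
    _ = 2 / ρ' := by ring
  set δ : ℝ := 2 * ε / N with hδ
  have hδ0 : 0 < δ := by positivity
  have hδle : δ ≤ 2 * ε * ρ' := by
    rw [hδ, div_le_iff₀ (by positivity : (0:ℝ) < (N:ℝ))]
    calc 2 * ε = 2 * ε * (ρ' * (1/ρ')) := by field_simp
    _ ≤ 2 * ε * (ρ' * N) := by
        apply mul_le_mul_of_nonneg_left _ (by positivity)
        exact mul_le_mul_of_nonneg_left hNge hρ'0.le
    _ = 2 * ε * ρ' * N := by ring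
  -- the pieces
  set piece : (Fin (d - n) → Fin N) → Set (EuclideanSpace ℝ (Fin d)) := fun k =>
    S ∩ {z | ∀ i : Fin (d - n),
      h i - ε + ((k i : ℕ) : ℝ) * δ ≤ z ⟨(i : ℕ), by have := i.isLt; omega⟩ ∧
      z ⟨(i : ℕ), by have := i.isLt; omega⟩ ≤ h i - ε + (((k i : ℕ) : ℝ) + 1) * δ} with hpiece
  have hcover : S ⊆ ⋃ k, piece k := by
    intro z hz
    have hchoice : ∀ i : Fin (d - n), ∃ kk : Fin N,
        h i - ε + ((kk : ℕ) : ℝ) * δ ≤ z ⟨(i : ℕ), by have := i.isLt; omega⟩ ∧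
        z ⟨(i : ℕ), by have := i.isLt; omega⟩ ≤ h i - ε + (((kk : ℕ) : ℝ) + 1) * δ := by
      intro i
      have hilt : (i : ℕ) < d := by have := i.isLt; omega
      have hzi : |z ⟨(i : ℕ), hilt⟩ - h i| ≤ ε := hz.2.1 ⟨(i : ℕ), hilt⟩ i.isLt
      rw [abs_le] at hzi
      obtain ⟨kk, hk1, hk2⟩ := grid_cover (h i - ε) (2 * ε) (by positivity) N hN0
        (z ⟨(i : ℕ), hilt⟩) (by linarith [hzi.1]) (by linarith [hzi.2])
      rw [show 2 * ε / (N:ℝ) = δ from rfl] at hk1 hk2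
      exact ⟨kk, hk1, hk2⟩
    choose k hk using hchoice
    exact Set.mem_iUnion.mpr ⟨k, hz, fun i => hk i⟩
  -- each piece has small diameter
  have hpdiam : ∀ k, ∀ z ∈ piece k, ∀ z' ∈ piece k, ‖z - z'‖ ≤ 16 * d * ε * ρ' := by
    intro k z hzp z' hz'p
    have hz1 : ∀ i : Fin d, ∀ hi : (i : ℕ) < d - n, |z i - h ⟨i, hi⟩| ≤ ε := hzp.1.2.1
    have hz'1 : ∀ i : Fin d, ∀ hi : (i : ℕ) < d - n, |z' i - h ⟨i, hi⟩| ≤ ε := hz'p.1.2.1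
    have hcd : ∀ i : Fin d, (hi : (i : ℕ) < d - n) → |(z - z') i| ≤ 2 * ε * ρ' := by
      intro i hi
      have h1 := hzp.2 ⟨(i : ℕ), hi⟩
      have h2 := hz'p.2 ⟨(i : ℕ), hi⟩
      have hieq : (⟨((⟨(i : ℕ), hi⟩ : Fin (d - n)) : ℕ), by omega⟩ : Fin d) = i := by
        apply Fin.ext; rfl
      rw [hieq] at h1 h2
      rw [PiLp.sub_apply, abs_le]
      constructor <;> nlinarith [h1.1, h1.2, h2.1, h2.2, hδle, hδ0.le]
    have hP : ‖Pmap d n (z - z')‖ ≤ d * (2 * ε * ρ') :=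
      normP_of_coords d n (z - z') (2 * ε * ρ') (by positivity) hcd
    have := master d n hdn V₀ hV₀ ρ hρ ε hε h v hc z z' hzp.1.1 hz'p.1.1 hz1 hz'1
    calc ‖z - z'‖ ≤ 2 * ‖Pmap d n (z - z')‖ + 12 * d * ε * min ρ 1 := this
    _ ≤ 2 * (d * (2 * ε * ρ')) + 12 * d * ε * ρ' := by rw [← hρ']; linarith
    _ = 16 * d * ε * ρ' := by ring
  have hr0 : (0:ℝ) ≤ 16 * d * ε * ρ' := by positivity
  have hpvol : ∀ k, volume (piece k) ≤ ENNReal.ofReal ((16 * d * ε * ρ') ^ d) *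
      volume (Metric.ball (0 : EuclideanSpace ℝ (Fin d)) 1) := fun k =>
    vol_of_diam d (piece k) _ hr0 (hpdiam k)
  -- sum up
  calc volume S ≤ volume (⋃ k, piece k) := measure_mono hcover
  _ ≤ ∑' k : Fin (d - n) → Fin N, volume (piece k) := measure_iUnion_le _
  _ ≤ ∑' _k : Fin (d - n) → Fin N, (ENNReal.ofReal ((16 * d * ε * ρ') ^ d) *
      volume (Metric.ball (0 : EuclideanSpace ℝ (Fin d)) 1)) := ENNReal.tsum_le_tsum hpvol
  _ = (Fintype.card (Fin (d - n) → Fin N)) • (ENNReal.ofReal ((16 * d * ε * ρ') ^ d) *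
      volume (Metric.ball (0 : EuclideanSpace ℝ (Fin d)) 1)) := by
      rw [tsum_eq_sum (s := Finset.univ) (by simp), Finset.sum_const, Finset.card_univ]
  _ ≤ ENNReal.ofReal ((2 / ρ') ^ (d - n) * (16 * d * ε * ρ') ^ d) *
      volume (Metric.ball (0 : EuclideanSpace ℝ (Fin d)) 1) := by
      have hcast : ((Fintype.card (Fin (d - n) → Fin N)) : ℝ≥0∞) =
          ENNReal.ofReal ((N : ℝ) ^ (d - n)) := by
        rw [Fintype.card_fun, Fintype.card_fin, Fintype.card_fin]
        rw [ENNReal.ofReal_pow (by positivity), ENNReal.ofReal_natCast]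
        push_cast
        ring
      rw [nsmul_eq_mul, hcast, ← mul_assoc,
        ENNReal.ofReal_mul (by positivity : (0:ℝ) ≤ (2/ρ')^(d-n))]
      apply mul_le_mul_left
      apply mul_le_mul_left
      exact ENNReal.ofReal_le_ofReal (pow_le_pow_left₀ (by positivity) hNle _)

/-- For a ball `B(V₀,ρ)` of `(d-n)`-planes at distance `O(1)` from `span(e_1,…,e_{d-n})`,
a point `v ∈ ℝ^n` and `h ∈ [-2,2]^{d-n}`, each slice `E₀ ∩ P_x` for
`x ∈ ∏ [h_i - ε, h_i + ε]` has `n`-dimensional measure `≲ (ερ)^n`, and consequently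
`|E₀ ∩ A_h| ≲ ε^d ρ^n`. -/
theorem stmt9 (d n : ℕ) (hn : 1 ≤ n) (hnd : n < d) :
    ∃ c : ℝ, 0 < c ∧ ∃ C : ℝ, 0 < C ∧
      ∀ (V₀ : Submodule ℝ (EuclideanSpace ℝ (Fin d))), Module.finrank ℝ V₀ = d - n →
      ∀ ρ : ℝ, 0 < ρ → ∀ ε : ℝ, 0 < ε →
      ∀ (h : Fin (d - n) → ℝ) (v : Fin n → ℝ), (∀ i, |h i| ≤ 2) →
      (∀ V' ∈ grBall d n V₀ ρ, dGr d V' (spanE d n) ≤ c) →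
      (∀ x : Fin (d - n) → ℝ, (∀ i, |x i - h i| ≤ ε) →
        μH[(n : ℝ)] (E0set d n V₀ ρ h v ∩ PxBox d n x) ≤
          ENNReal.ofReal (C * (ε * ρ) ^ n)) ∧
      volume (E0set d n V₀ ρ h v ∩ Ah d n h ε) ≤ ENNReal.ofReal (C * ε ^ d * ρ ^ n) := by
  set Kb : ℝ := (volume (Metric.ball (0 : EuclideanSpace ℝ (Fin d)) 1)).toReal with hKb
  have hKb0 : 0 ≤ Kb := ENNReal.toReal_nonneg
  have hd1 : (1:ℝ) ≤ (d:ℝ) := by exact_mod_cast Nat.one_le_cast.mpr (by omega)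
  refine ⟨1/8, by norm_num, (32*d*d)^d * (Kb + 1), by positivity, ?_⟩
  intro V₀ hV₀ ρ hρ ε hε h v hh2 hc
  set ρ' : ℝ := min ρ 1 with hρ'
  have hρ'0 : 0 < ρ' := lt_min hρ one_pos
  have hρ'ρ : ρ' ≤ ρ := min_le_left _ _
  constructor
  · intro x hx
    refine le_trans (slice_bound d n hn hnd V₀ hV₀ ρ hρ ε hε h v hc x hx) ?_
    apply ENNReal.ofReal_le_ofReal
    have e1 : (d:ℝ) ^ n * (24 * d * ε * min ρ 1) ^ n = (24*(d:ℝ)*d) ^ n * (ε * ρ') ^ n := by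
      rw [← mul_pow, ← mul_pow, ← hρ']
      congr 1
      ring
    rw [e1]
    calc (24*(d:ℝ)*d) ^ n * (ε * ρ') ^ n ≤ (32*(d:ℝ)*d) ^ d * (ε * ρ) ^ n := by
          apply mul_le_mul _ _ (by positivity) (by positivity)
          · calc (24*(d:ℝ)*d) ^ n ≤ (32*(d:ℝ)*d) ^ n :=
                pow_le_pow_left₀ (by positivity) (by nlinarith) n
            _ ≤ (32*(d:ℝ)*d) ^ d := pow_le_pow_right₀ (by nlinarith) hnd.le
          · exact pow_le_pow_left₀ (by positivity) (by nlinarith) n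
    _ ≤ (32*(d:ℝ)*d) ^ d * (Kb + 1) * (ε * ρ) ^ n := by
          apply mul_le_mul_of_nonneg_right _ (by positivity)
          nlinarith [pow_pos (by positivity : (0:ℝ) < 32*(d:ℝ)*d) d]
  · refine le_trans (vol_bound d n hn hnd V₀ hV₀ ρ hρ ε hε h v hc) ?_
    have hball : volume (Metric.ball (0 : EuclideanSpace ℝ (Fin d)) 1) = ENNReal.ofReal Kb := by
      rw [hKb, ENNReal.ofReal_toReal measure_ball_lt_top.ne]
    rw [hball, ← ENNReal.ofReal_mul (by positivity)]
    apply ENNReal.ofReal_le_ofReal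
    have hsplit : ρ' ^ d = ρ' ^ (d - n) * ρ' ^ n := by
      rw [← pow_add]
      congr 1
      omega
    have hA : (2 / ρ') ^ (d - n) * (16 * (d:ℝ) * ε * ρ') ^ d =
        2 ^ (d - n) * (16 * (d:ℝ) * ε) ^ d * ρ' ^ n := by
      rw [div_pow, mul_pow (16 * (d:ℝ) * ε) ρ' d, hsplit]
      field_simp
    rw [← hρ', hA]
    have e2 : (16*(d:ℝ)*ε) ^ d = (16*(d:ℝ))^d * ε^d := by
      rw [← mul_pow]
    rw [e2]
    calc 2 ^ (d-n) * ((16*(d:ℝ))^d * ε^d) * ρ' ^ n * Kb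
        ≤ 2 ^ d * ((16*(d:ℝ))^d * ε^d) * ρ ^ n * (Kb + 1) := by
          apply mul_le_mul _ (by linarith) hKb0 (by positivity)
          apply mul_le_mul _ _ (by positivity) (by positivity)
          · apply mul_le_mul_of_nonneg_right _ (by positivity)
            exact pow_le_pow_right₀ one_le_two (by omega)
          · exact pow_le_pow_left₀ hρ'0.le hρ'ρ n
    _ = (32*(d:ℝ))^d * (Kb + 1) * ε^d * ρ^n := by
          rw [show (32*(d:ℝ))^d = 2^d * (16*(d:ℝ))^d by rw [← mul_pow]; congr 1; ring]
          ring
    _ ≤ (32*(d:ℝ)*d)^d * (Kb + 1) * ε^d * ρ^n := by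
          apply mul_le_mul_of_nonneg_right _ (by positivity)
          apply mul_le_mul_of_nonneg_right _ (by positivity)
          apply mul_le_mul_of_nonneg_right _ (by linarith)
          exact pow_le_pow_left₀ (by positivity) (by nlinarith) d
    _ = (32*(d:ℝ)*d)^d * (Kb + 1) * ε^d * ρ^n := rfl
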